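/- m(S_j) = λ₀(S_j) = j, m(S_{j'}) = λ₀(S_{j'}) = j', and m(S_J) = λ₀(S_J) = J; in particular j, j', J all belong to the Markov spectrum M. Moreover, j₀ < j < j' < J < j₀ + 6×10⁻¹¹. -/
import Mathlib


open Filter Set

/-- Convergents of a continued fraction: `cfConv n a` is the value of the finite
continued fraction `[a 0; a 1, …, a n]`. -/
noncomputable def cfConv : ℕ → (ℕ → ℕ) → ℝ
  | 0, a => (a 0 : ℝ)
  | n + 1, a => (a 0 : ℝ) + 1 / cfConv n (fun i => a (i + 1))

/-- The value `[a₀; a₁, a₂, …]` of an infinite continued fraction, as the limit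
of its convergents (which exists since all entries are positive integers). -/
noncomputable def cfValue (a : ℕ → ℕ) : ℝ :=
  limUnder atTop (fun n => cfConv n a)

/-- `λ₀(S) = [a₀; a₁, a₂, …] + [0; a₋₁, a₋₂, …]` for a bi-infinite sequence `S`. -/
noncomputable def lambda0 (S : ℤ → ℕ) : ℝ :=
  cfValue (fun n : ℕ => S (n : ℤ)) + 1 / cfValue (fun n : ℕ => S (-(n : ℤ) - 1))

/-- `λ_k(S) = λ₀` applied to the sequence shifted by `k`. -/
noncomputable def lambdaK (k : ℤ) (S : ℤ → ℕ) : ℝ :=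
  lambda0 (fun n => S (n + k))

/-- The Markov value `m(S) = sup_{k ∈ ℤ} λ_k(S)`. -/
noncomputable def markovValue (S : ℤ → ℕ) : ℝ :=
  ⨆ k : ℤ, lambdaK k S

/-- The Lagrange value `ℓ(S) = limsup_{k → +∞} λ_k(S)`. -/
noncomputable def lagrangeValue (S : ℤ → ℕ) : ℝ :=
  Filter.limsup (fun k : ℤ => lambdaK k S) atTop

/-- The Markov spectrum: Markov values of bi-infinite sequences of positive
integers whose Markov value is finite. -/
def MarkovSpectrum : Set ℝ :=
  {x | ∃ S : ℤ → ℕ, (∀ n, 0 < S n) ∧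
    BddAbove (Set.range fun k : ℤ => lambdaK k S) ∧ markovValue S = x}

/-- The Lagrange spectrum: Lagrange values of bi-infinite sequences of positive
integers whose Lagrange value is finite. -/
def LagrangeSpectrum : Set ℝ :=
  {x | ∃ S : ℤ → ℕ, (∀ n, 0 < S n) ∧
    Filter.IsBoundedUnder (· ≤ ·) atTop (fun k : ℤ => lambdaK k S) ∧ lagrangeValue S = x}

/-- The periodic sequence `…123332112…` of period 9 with
`(a₋₄,…,a₄) = (1,2,3,3,3,2,1,1,2)`. -/
def P2 : ℤ → ℕ := fun n =>
  match (n % 9).toNat with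
  | 0 => 3 | 1 => 2 | 2 => 1 | 3 => 1 | 4 => 2 | 5 => 1 | 6 => 2 | 7 => 3 | _ => 3

/-- The sequence `S_j = \overline{21}\,1112\,ω₂\,ω₂^*\,\overline{ω₂}`. -/
def Sj2 : ℤ → ℕ := fun n =>
  if -13 ≤ n then P2 n
  else if n = -14 then 2
  else if n = -15 then 1
  else if n = -16 then 1
  else if n = -17 then 1
  else if n % 2 = 0 then 1
  else 2

/-- The sequence `S_{j'} = \overline{21}\,12332121\,12333212\,ω₂\,ω₂^*\,\overline{ω₂}`. -/
def Sjp : ℤ → ℕ := fun n =>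
  if -13 ≤ n then P2 n
  else if n = -14 then 2
  else if n = -15 then 1
  else if n = -16 then 2
  else if n = -17 then 3
  else if n = -18 then 3
  else if n = -19 then 3
  else if n = -20 then 2
  else if n = -21 then 1
  else if n = -22 then 1
  else if n = -23 then 2
  else if n = -24 then 1
  else if n = -25 then 2
  else if n = -26 then 3
  else if n = -27 then 3
  else if n = -28 then 2
  else if n = -29 then 1
  else if n % 2 = 0 then 1
  else 2

/-- The sequence `S_J = \overline{12}\,ω₂\,ω₂\,ω₂^*\,ω₂\,11\,\overline{12}`. -/
def SJ2 : ℤ → ℕ := fun n =>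
  if n < -22 then (if n % 2 = 0 then 1 else 2)
  else if n ≤ 13 then P2 n
  else if n ≤ 15 then 1
  else if n % 2 = 0 then 1
  else 2


namespace MCF

def Ok (a : ℕ → ℕ) : Prop := ∀ i, 0 < a i ∧ a i ≤ 3

lemma ok_tail {a : ℕ → ℕ} (h : Ok a) : Ok (fun i => a (i + 1)) := fun i => h (i + 1)

def cfB : Bool → ℕ → (ℕ → ℕ) → ℕ × ℕ
  | b, 0, a => (a 0 + (if b then 1 else 0), 1)
  | b, d+1, a =>
    match cfB (!b) d (fun i => a (i+1)) with
    | (p, q) => (a 0 * p + q, p)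

lemma cfB_succ (b : Bool) (d : ℕ) (a : ℕ → ℕ) :
    cfB b (d+1) a = (a 0 * (cfB (!b) d fun i => a (i+1)).1 + (cfB (!b) d fun i => a (i+1)).2,
      (cfB (!b) d fun i => a (i+1)).1) := rfl

lemma cfB_congr : ∀ (d : ℕ) (b : Bool) (a a' : ℕ → ℕ),
    (∀ i, i ≤ d → a i = a' i) → cfB b d a = cfB b d a' := by
  intro d
  induction d with
  | zero => intro b a a' h; simp [cfB, h 0 le_rfl]
  | succ d ih =>
      intro b a a' h
      rw [cfB_succ, cfB_succ, h 0 (by omega), ih (!b) _ _ (fun i hi => h (i+1) (by omega))]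

lemma cfB_pos : ∀ (d : ℕ) (b : Bool) (a : ℕ → ℕ), Ok a →
    0 < (cfB b d a).2 ∧ (cfB b d a).2 ≤ (cfB b d a).1 := by
  intro d
  induction d with
  | zero =>
      intro b a h
      have := (h 0).1
      cases b <;> simp [cfB] <;> omega
  | succ d ih =>
      intro b a h
      obtain ⟨h1, h2⟩ := ih (!b) (fun i => a (i+1)) (ok_tail h)
      have ha := (h 0).1
      rw [cfB_succ]
      refine ⟨by omega, ?_⟩
      calc (cfB (!b) d fun i => a (i+1)).1 = 1 * (cfB (!b) d fun i => a (i+1)).1 := (one_mul _).symm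
        _ ≤ a 0 * (cfB (!b) d fun i => a (i+1)).1 := Nat.mul_le_mul_right _ ha
        _ ≤ _ := Nat.le_add_right _ _

noncomputable def cfBR (b : Bool) (d : ℕ) (a : ℕ → ℕ) : ℝ :=
  ((cfB b d a).1 : ℝ) / ((cfB b d a).2 : ℝ)

lemma one_le_cfBR (b : Bool) (d : ℕ) (a : ℕ → ℕ) (h : Ok a) : 1 ≤ cfBR b d a := by
  obtain ⟨h1, h2⟩ := cfB_pos d b a h
  have h1' : (0:ℝ) < ((cfB b d a).2 : ℝ) := by exact_mod_cast h1
  rw [cfBR, le_div_iff₀ h1', one_mul]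
  exact_mod_cast h2

lemma cfBR_pos (b : Bool) (d : ℕ) (a : ℕ → ℕ) (h : Ok a) : 0 < cfBR b d a :=
  lt_of_lt_of_le one_pos (one_le_cfBR b d a h)

lemma cfBR_succ (b : Bool) (d : ℕ) (a : ℕ → ℕ) (h : Ok a) :
    cfBR b (d+1) a = (a 0 : ℝ) + 1 / cfBR (!b) d (fun i => a (i+1)) := by
  obtain ⟨hq, hpq⟩ := cfB_pos d (!b) (fun i => a (i+1)) (ok_tail h)
  have hp : 0 < (cfB (!b) d fun i => a (i+1)).1 := lt_of_lt_of_le hq hpq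
  have hpr : (0:ℝ) < ((cfB (!b) d fun i => a (i+1)).1 : ℝ) := by exact_mod_cast hp
  have hqr : (0:ℝ) < ((cfB (!b) d fun i => a (i+1)).2 : ℝ) := by exact_mod_cast hq
  rw [cfBR, cfB_succ, cfBR]
  push_cast
  field_simp

lemma cfBR_le (b : Bool) (d : ℕ) (a : ℕ → ℕ) (h : Ok a) : cfBR b d a ≤ (a 0 : ℝ) + 1 := by
  cases d with
  | zero => cases b <;> simp [cfBR, cfB] <;> push_cast <;> norm_num
  | succ d =>
      rw [cfBR_succ b d a h]
      have h1 := one_le_cfBR (!b) d (fun i => a (i+1)) (ok_tail h)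
      have h2 : 1 / cfBR (!b) d (fun i => a (i+1)) ≤ 1 := by
        rw [div_le_one (by linarith)]; exact h1
      linarith

lemma cfConv_base : ∀ (m : ℕ) (a : ℕ → ℕ), Ok a →
    (a 0 : ℝ) ≤ cfConv m a ∧ cfConv m a ≤ (a 0 : ℝ) + 1 ∧ 1 ≤ cfConv m a := by
  intro m
  induction m with
  | zero =>
      intro a h
      have h1 : (1:ℝ) ≤ (a 0 : ℝ) := by exact_mod_cast (h 0).1
      exact ⟨le_refl _, by simp [cfConv], by simpa [cfConv] using h1⟩
  | succ m ih =>
      intro a h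
      have ht := ih (fun i => a (i+1)) (ok_tail h)
      have h1 : (1:ℝ) ≤ cfConv m (fun i => a (i+1)) := ht.2.2
      have hpos : (0:ℝ) < cfConv m (fun i => a (i+1)) := by linarith
      have ha : (1:ℝ) ≤ (a 0 : ℝ) := by exact_mod_cast (h 0).1
      have h2 : 0 < 1 / cfConv m (fun i => a (i+1)) := by positivity
      have h3 : 1 / cfConv m (fun i => a (i+1)) ≤ 1 := by
        rw [div_le_one hpos]; exact h1
      simp only [cfConv]
      exact ⟨by linarith, by linarith, by linarith⟩

lemma sandwich : ∀ (d : ℕ) (a : ℕ → ℕ) (m : ℕ), Ok a → d ≤ m →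
    cfBR false d a ≤ cfConv m a ∧ cfConv m a ≤ cfBR true d a := by
  intro d
  induction d with
  | zero =>
      intro a m h _
      have hb := cfConv_base m a h
      constructor
      · calc cfBR false 0 a = (a 0 : ℝ) := by simp [cfBR, cfB]
          _ ≤ _ := hb.1
      · calc cfConv m a ≤ (a 0 : ℝ) + 1 := hb.2.1
          _ = cfBR true 0 a := by simp [cfBR, cfB]
  | succ d ih =>
      intro a m h hdm
      obtain ⟨m, rfl⟩ : ∃ m', m = m' + 1 := ⟨m - 1, by omega⟩
      have ht := ih (fun i => a (i+1)) m (ok_tail h) (by omega)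
      have h1c : 1 ≤ cfConv m (fun i => a (i+1)) := (cfConv_base m _ (ok_tail h)).2.2
      have hcpos : (0:ℝ) < cfConv m (fun i => a (i+1)) := by linarith
      have hlo1 : 1 ≤ cfBR false d (fun i => a (i+1)) := one_le_cfBR _ _ _ (ok_tail h)
      have hhi1 : 1 ≤ cfBR true d (fun i => a (i+1)) := one_le_cfBR _ _ _ (ok_tail h)
      rw [cfBR_succ _ _ _ h, cfBR_succ _ _ _ h]
      simp only [Bool.not_false, Bool.not_true]
      show (a 0 : ℝ) + 1 / cfBR true d (fun i => a (i+1)) ≤ (a 0 : ℝ) + 1 / cfConv m (fun i => a (i+1)) ∧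
        (a 0 : ℝ) + 1 / cfConv m (fun i => a (i+1)) ≤ (a 0 : ℝ) + 1 / cfBR false d (fun i => a (i+1))
      constructor
      · have := one_div_le_one_div_of_le hcpos ht.2
        linarith
      · have := one_div_le_one_div_of_le (by linarith : (0:ℝ) < cfBR false d (fun i => a (i+1))) ht.1
        linarith

lemma prod_ge (d : ℕ) (a : ℕ → ℕ) (h : Ok a) :
    (25:ℝ)/16 ≤ cfBR false d a * cfBR true d a := by
  have ha : (1:ℝ) ≤ (a 0 : ℝ) := by exact_mod_cast (h 0).1
  cases d with
  | zero =>
      have e1 : cfBR false 0 a = (a 0 : ℝ) := by simp [cfBR, cfB]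
      have e2 : cfBR true 0 a = (a 0 : ℝ) + 1 := by simp [cfBR, cfB]
      rw [e1, e2]; nlinarith
  | succ d =>
      have h3 : ((a 1 : ℝ)) + 1 ≤ 4 := by
        have h31 : (a 1 : ℝ) ≤ 3 := by exact_mod_cast (h 1).2
        linarith
      have hbt : cfBR true d (fun i => a (i+1)) ≤ 4 := le_trans (cfBR_le _ _ _ (ok_tail h)) h3
      have hbf : cfBR false d (fun i => a (i+1)) ≤ 4 := le_trans (cfBR_le _ _ _ (ok_tail h)) h3
      have hpt : 0 < cfBR true d (fun i => a (i+1)) := cfBR_pos _ _ _ (ok_tail h)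
      have hpf : 0 < cfBR false d (fun i => a (i+1)) := cfBR_pos _ _ _ (ok_tail h)
      have i1 : (1:ℝ)/4 ≤ 1 / cfBR true d (fun i => a (i+1)) := one_div_le_one_div_of_le hpt hbt
      have i2 : (1:ℝ)/4 ≤ 1 / cfBR false d (fun i => a (i+1)) := one_div_le_one_div_of_le hpf hbf
      rw [cfBR_succ _ _ _ h, cfBR_succ _ _ _ h]
      simp only [Bool.not_false, Bool.not_true]
      nlinarith

lemma diam : ∀ (d : ℕ) (a : ℕ → ℕ), Ok a →
    cfBR true d a - cfBR false d a ≤ (16/25 : ℝ) ^ d := by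
  intro d
  induction d with
  | zero =>
      intro a h
      have e1 : cfBR false 0 a = (a 0 : ℝ) := by simp [cfBR, cfB]
      have e2 : cfBR true 0 a = (a 0 : ℝ) + 1 := by simp [cfBR, cfB]
      rw [e1, e2]; norm_num
  | succ d ih =>
      intro a h
      have hd := ih (fun i => a (i+1)) (ok_tail h)
      have hp := prod_ge d (fun i => a (i+1)) (ok_tail h)
      have hlo1 : 1 ≤ cfBR false d (fun i => a (i+1)) := one_le_cfBR _ _ _ (ok_tail h)
      have hhi1 : 1 ≤ cfBR true d (fun i => a (i+1)) := one_le_cfBR _ _ _ (ok_tail h)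
      rw [cfBR_succ _ _ _ h, cfBR_succ _ _ _ h]
      simp only [Bool.not_false, Bool.not_true]
      have e : (a 0 : ℝ) + 1 / cfBR false d (fun i => a (i+1)) -
          ((a 0 : ℝ) + 1 / cfBR true d (fun i => a (i+1))) =
          (cfBR true d (fun i => a (i+1)) - cfBR false d (fun i => a (i+1))) /
            (cfBR false d (fun i => a (i+1)) * cfBR true d (fun i => a (i+1))) := by
        field_simp
        ring
      rw [e]
      have key : (cfBR true d (fun i => a (i+1)) - cfBR false d (fun i => a (i+1))) /
          (cfBR false d (fun i => a (i+1)) * cfBR true d (fun i => a (i+1))) ≤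
          (16/25 : ℝ) ^ d / (25/16) :=
        div_le_div₀ (by positivity) hd (by norm_num) hp
      calc _ ≤ (16/25 : ℝ) ^ d / (25/16) := key
        _ = (16/25 : ℝ) ^ (d+1) := by rw [pow_succ]; ring

lemma cfConv_tendsto (a : ℕ → ℕ) (h : Ok a) :
    Tendsto (fun m => cfConv m a) atTop (nhds (cfValue a)) := by
  have hc : CauchySeq (fun m => cfConv m a) := by
    apply cauchySeq_of_le_geometric (16/25 : ℝ) 1 (by norm_num)
    intro n
    have s1 := sandwich n a n h le_rfl
    have s2 := sandwich n a (n+1) h (by omega)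
    have hdm := diam n a h
    rw [Real.dist_eq, abs_sub_le_iff]
    constructor <;> · simp only [one_mul]; linarith [s1.1, s1.2, s2.1, s2.2]
  obtain ⟨x, hx⟩ := cauchySeq_tendsto_of_complete hc
  have : cfValue a = x := hx.limUnder_eq
  rw [this]; exact hx

lemma cfValue_bounds (d : ℕ) (a : ℕ → ℕ) (h : Ok a) :
    cfBR false d a ≤ cfValue a ∧ cfValue a ≤ cfBR true d a := by
  have hx := cfConv_tendsto a h
  constructor
  · exact ge_of_tendsto hx (Filter.eventually_atTop.2 ⟨d, fun m hm => (sandwich d a m h hm).1⟩)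
  · exact le_of_tendsto hx (Filter.eventually_atTop.2 ⟨d, fun m hm => (sandwich d a m h hm).2⟩)

lemma one_le_cfValue (a : ℕ → ℕ) (h : Ok a) : 1 ≤ cfValue a :=
  le_trans (one_le_cfBR false 0 a h) (cfValue_bounds 0 a h).1


def upF (d : ℕ) (f b : ℕ → ℕ) : ℕ × ℕ :=
  match cfB true d f, cfB false d b with
  | (p1, q1), (p2, q2) => (p1 * p2 + q2 * q1, q1 * p2)

def loF (d : ℕ) (f b : ℕ → ℕ) : ℕ × ℕ :=
  match cfB false d f, cfB true d b with
  | (p1, q1), (p2, q2) => (p1 * p2 + q2 * q1, q1 * p2)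

lemma upF_eq (d : ℕ) (f b : ℕ → ℕ) : upF d f b =
    ((cfB true d f).1 * (cfB false d b).1 + (cfB false d b).2 * (cfB true d f).2,
      (cfB true d f).2 * (cfB false d b).1) := rfl

lemma loF_eq (d : ℕ) (f b : ℕ → ℕ) : loF d f b =
    ((cfB false d f).1 * (cfB true d b).1 + (cfB true d b).2 * (cfB false d f).2,
      (cfB false d f).2 * (cfB true d b).1) := rfl

def fracLE (x y : ℕ × ℕ) : Prop := x.1 * y.2 ≤ y.1 * x.2
def fracLT (x y : ℕ × ℕ) : Prop := x.1 * y.2 < y.1 * x.2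
def fracLT6 (x y : ℕ × ℕ) : Prop :=
  x.1 * (y.2 * 10 ^ 11) < (y.1 * 10 ^ 11 + 6 * y.2) * x.2

instance (x y : ℕ × ℕ) : Decidable (fracLE x y) := by unfold fracLE; infer_instance
instance (x y : ℕ × ℕ) : Decidable (fracLT x y) := by unfold fracLT; infer_instance
instance (x y : ℕ × ℕ) : Decidable (fracLT6 x y) := by unfold fracLT6; infer_instance

lemma upF_congr (d : ℕ) (f b f' b' : ℕ → ℕ) (h1 : ∀ i, i ≤ d → f i = f' i)
    (h2 : ∀ i, i ≤ d → b i = b' i) : upF d f b = upF d f' b' := by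
  rw [upF_eq, upF_eq, cfB_congr d true f f' h1, cfB_congr d false b b' h2]

lemma upF_den_pos (d : ℕ) (f b : ℕ → ℕ) (hf : Ok f) (hb : Ok b) : 0 < (upF d f b).2 := by
  obtain ⟨h1, _⟩ := cfB_pos d true f hf
  obtain ⟨h2, h3⟩ := cfB_pos d false b hb
  rw [upF_eq]
  exact Nat.mul_pos h1 (lt_of_lt_of_le h2 h3)

lemma loF_den_pos (d : ℕ) (f b : ℕ → ℕ) (hf : Ok f) (hb : Ok b) : 0 < (loF d f b).2 := by
  obtain ⟨h1, _⟩ := cfB_pos d false f hf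
  obtain ⟨h2, h3⟩ := cfB_pos d true b hb
  rw [loF_eq]
  exact Nat.mul_pos h1 (lt_of_lt_of_le h2 h3)

lemma upF_val (d : ℕ) (f b : ℕ → ℕ) (hf : Ok f) (hb : Ok b) :
    ((upF d f b).1 : ℝ) / ((upF d f b).2 : ℝ) = cfBR true d f + 1 / cfBR false d b := by
  obtain ⟨hq1, hpq1⟩ := cfB_pos d true f hf
  obtain ⟨hq2, hpq2⟩ := cfB_pos d false b hb
  have hp2 : 0 < (cfB false d b).1 := lt_of_lt_of_le hq2 hpq2
  have c1 : (0:ℝ) < ((cfB true d f).2 : ℝ) := by exact_mod_cast hq1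
  have c2 : (0:ℝ) < ((cfB false d b).1 : ℝ) := by exact_mod_cast hp2
  have c3 : (0:ℝ) < ((cfB false d b).2 : ℝ) := by exact_mod_cast hq2
  rw [upF_eq, cfBR, cfBR]
  push_cast
  field_simp

lemma loF_val (d : ℕ) (f b : ℕ → ℕ) (hf : Ok f) (hb : Ok b) :
    ((loF d f b).1 : ℝ) / ((loF d f b).2 : ℝ) = cfBR false d f + 1 / cfBR true d b := by
  obtain ⟨hq1, hpq1⟩ := cfB_pos d false f hf
  obtain ⟨hq2, hpq2⟩ := cfB_pos d true b hb
  have hp2 : 0 < (cfB true d b).1 := lt_of_lt_of_le hq2 hpq2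
  have c1 : (0:ℝ) < ((cfB false d f).2 : ℝ) := by exact_mod_cast hq1
  have c2 : (0:ℝ) < ((cfB true d b).1 : ℝ) := by exact_mod_cast hp2
  have c3 : (0:ℝ) < ((cfB true d b).2 : ℝ) := by exact_mod_cast hq2
  rw [loF_eq, cfBR, cfBR]
  push_cast
  field_simp

lemma lam_le_upF (d : ℕ) (f b : ℕ → ℕ) (hf : Ok f) (hb : Ok b) :
    cfValue f + 1 / cfValue b ≤ ((upF d f b).1 : ℝ) / ((upF d f b).2 : ℝ) := by
  rw [upF_val d f b hf hb]
  have h1 := (cfValue_bounds d f hf).2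
  have h2 := (cfValue_bounds d b hb).1
  have h3 : 0 < cfBR false d b := cfBR_pos _ _ _ hb
  have h5 := one_div_le_one_div_of_le h3 h2
  linarith

lemma loF_le_lam (d : ℕ) (f b : ℕ → ℕ) (hf : Ok f) (hb : Ok b) :
    ((loF d f b).1 : ℝ) / ((loF d f b).2 : ℝ) ≤ cfValue f + 1 / cfValue b := by
  rw [loF_val d f b hf hb]
  have h1 := (cfValue_bounds d f hf).1
  have h2 := (cfValue_bounds d b hb).2
  have h4 : 0 < cfValue b := lt_of_lt_of_le one_pos (one_le_cfValue b hb)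
  have h5 := one_div_le_one_div_of_le h4 h2
  linarith

lemma lam_le_lam {f b f' b' : ℕ → ℕ} (hf : Ok f) (hb : Ok b) (hf' : Ok f') (hb' : Ok b')
    {d e : ℕ} (h : fracLE (upF d f b) (loF e f' b')) :
    cfValue f + 1 / cfValue b ≤ cfValue f' + 1 / cfValue b' := by
  refine le_trans (lam_le_upF d f b hf hb) (le_trans ?_ (loF_le_lam e f' b' hf' hb'))
  have d1 : (0:ℝ) < ((upF d f b).2 : ℝ) := by exact_mod_cast upF_den_pos d f b hf hb
  have d2 : (0:ℝ) < ((loF e f' b').2 : ℝ) := by exact_mod_cast loF_den_pos e f' b' hf' hb'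
  rw [div_le_div_iff₀ d1 d2]
  exact_mod_cast h

lemma lam_lt_lam {f b f' b' : ℕ → ℕ} (hf : Ok f) (hb : Ok b) (hf' : Ok f') (hb' : Ok b')
    {d e : ℕ} (h : fracLT (upF d f b) (loF e f' b')) :
    cfValue f + 1 / cfValue b < cfValue f' + 1 / cfValue b' := by
  refine lt_of_le_of_lt (lam_le_upF d f b hf hb) (lt_of_lt_of_le ?_ (loF_le_lam e f' b' hf' hb'))
  have d1 : (0:ℝ) < ((upF d f b).2 : ℝ) := by exact_mod_cast upF_den_pos d f b hf hb
  have d2 : (0:ℝ) < ((loF e f' b').2 : ℝ) := by exact_mod_cast loF_den_pos e f' b' hf' hb'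
  rw [div_lt_div_iff₀ d1 d2]
  exact_mod_cast h

lemma lam_lt_add {f b f' b' : ℕ → ℕ} (hf : Ok f) (hb : Ok b) (hf' : Ok f') (hb' : Ok b')
    {d e : ℕ} (h : fracLT6 (upF d f b) (loF e f' b')) :
    cfValue f + 1 / cfValue b < cfValue f' + 1 / cfValue b' + 6 / 10 ^ 11 := by
  have step1 := lam_le_upF d f b hf hb
  have step2 := loF_le_lam e f' b' hf' hb'
  have d1 : (0:ℝ) < ((upF d f b).2 : ℝ) := by exact_mod_cast upF_den_pos d f b hf hb
  have d2 : (0:ℝ) < ((loF e f' b').2 : ℝ) := by exact_mod_cast loF_den_pos e f' b' hf' hb'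
  have key : ((upF d f b).1 : ℝ) / ((upF d f b).2 : ℝ) <
      ((loF e f' b').1 : ℝ) / ((loF e f' b').2 : ℝ) + 6 / 10 ^ 11 := by
    have hnat : ((upF d f b).1 : ℝ) * (((loF e f' b').2 : ℝ) * 10 ^ 11) <
        (((loF e f' b').1 : ℝ) * 10 ^ 11 + 6 * ((loF e f' b').2 : ℝ)) * ((upF d f b).2 : ℝ) := by
      exact_mod_cast h
    rw [div_add_div _ _ (ne_of_gt d2) (by norm_num : (10:ℝ) ^ 11 ≠ 0),
      div_lt_div_iff₀ d1 (by positivity : (0:ℝ) < ((loF e f' b').2 : ℝ) * 10 ^ 11)]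
    nlinarith
  linarith

lemma lambda0_eq (S : ℤ → ℕ) : lambda0 S =
    cfValue (fun n : ℕ => S (n : ℤ)) + 1 / cfValue (fun n : ℕ => S (-(n : ℤ) - 1)) := rfl

lemma lambdaK_eq (k : ℤ) (S : ℤ → ℕ) : lambdaK k S =
    cfValue (fun n : ℕ => S ((n : ℤ) + k)) + 1 / cfValue (fun n : ℕ => S (-(n : ℤ) - 1 + k)) := rfl

lemma lambdaK_zero (S : ℤ → ℕ) : lambdaK 0 S = lambda0 S := by
  show lambda0 (fun n => S (n + 0)) = lambda0 S
  rw [show (fun n : ℤ => S (n + 0)) = S from funext fun n => by rw [add_zero]]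

lemma markov_pack (S : ℤ → ℕ) (hok : ∀ n : ℤ, 0 < S n ∧ S n ≤ 3)
    (hkey : ∀ k : ℤ, lambdaK k S ≤ lambdaK 0 S) :
    markovValue S = lambda0 S ∧ lambda0 S ∈ MarkovSpectrum := by
  have hbdd : BddAbove (Set.range fun k : ℤ => lambdaK k S) :=
    ⟨lambdaK 0 S, by rintro x ⟨k, rfl⟩; exact hkey k⟩
  have hm : markovValue S = lambda0 S := by
    unfold markovValue
    apply le_antisymm (ciSup_le fun k => (hkey k).trans (le_of_eq (lambdaK_zero S)))
    rw [← lambdaK_zero S]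
    exact le_ciSup hbdd 0
  exact ⟨hm, ⟨S, fun n => (hok n).1, hbdd, hm⟩⟩



lemma P2_mod {m n : ℤ} (h : m % 9 = n % 9) : P2 m = P2 n := by unfold P2; rw [h]

lemma P2_ok : ∀ n : ℤ, 0 < P2 n ∧ P2 n ≤ 3 := by
  intro n
  unfold P2
  generalize (n % 9).toNat = m
  rcases m with _|_|_|_|_|_|_|_|m <;>
    first
      | exact ⟨by decide, by decide⟩
      | exact ⟨(by decide : (0:ℕ) < 3), (by decide : (3:ℕ) ≤ 3)⟩

lemma Sj2_right {n : ℤ} (h : -13 ≤ n) : Sj2 n = P2 n := by unfold Sj2; rw [if_pos h]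

lemma Sj2_left {n : ℤ} (h : n ≤ -18) : Sj2 n = if n % 2 = 0 then 1 else 2 := by
  unfold Sj2
  rw [if_neg (by omega), if_neg (by omega), if_neg (by omega), if_neg (by omega),
    if_neg (by omega)]

lemma Sjp_right {n : ℤ} (h : -13 ≤ n) : Sjp n = P2 n := by unfold Sjp; rw [if_pos h]

lemma Sjp_left {n : ℤ} (h : n ≤ -30) : Sjp n = if n % 2 = 0 then 1 else 2 := by
  unfold Sjp
  rw [if_neg (by omega), if_neg (by omega), if_neg (by omega), if_neg (by omega),
    if_neg (by omega), if_neg (by omega), if_neg (by omega), if_neg (by omega),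
    if_neg (by omega), if_neg (by omega), if_neg (by omega), if_neg (by omega),
    if_neg (by omega), if_neg (by omega), if_neg (by omega), if_neg (by omega),
    if_neg (by omega)]

lemma SJ2_left {n : ℤ} (h : n ≤ -23) : SJ2 n = if n % 2 = 0 then 1 else 2 := by
  unfold SJ2; rw [if_pos (by omega)]

lemma SJ2_mid {n : ℤ} (h1 : -22 ≤ n) (h2 : n ≤ 13) : SJ2 n = P2 n := by
  unfold SJ2; rw [if_neg (by omega), if_pos (by omega)]

lemma SJ2_right {n : ℤ} (h : 16 ≤ n) : SJ2 n = if n % 2 = 0 then 1 else 2 := by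
  unfold SJ2; rw [if_neg (by omega), if_neg (by omega), if_neg (by omega)]

lemma Sj2_ok : ∀ n : ℤ, 0 < Sj2 n ∧ Sj2 n ≤ 3 := by
  intro n
  rcases le_or_gt (-13) n with h | h
  · rw [Sj2_right h]; exact P2_ok n
  rcases le_or_gt n (-18) with h2 | h2
  · rw [Sj2_left h2]; split_ifs <;> omega
  · interval_cases n <;> exact ⟨by decide, by decide⟩

lemma Sjp_ok : ∀ n : ℤ, 0 < Sjp n ∧ Sjp n ≤ 3 := by
  intro n
  rcases le_or_gt (-13) n with h | h
  · rw [Sjp_right h]; exact P2_ok n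
  rcases le_or_gt n (-30) with h2 | h2
  · rw [Sjp_left h2]; split_ifs <;> omega
  · interval_cases n <;> exact ⟨by decide, by decide⟩

lemma SJ2_ok : ∀ n : ℤ, 0 < SJ2 n ∧ SJ2 n ≤ 3 := by
  intro n
  rcases le_or_gt n (-23) with h | h
  · rw [SJ2_left h]; split_ifs <;> omega
  rcases le_or_gt n 13 with h2 | h2
  · rw [SJ2_mid (by omega) h2]; exact P2_ok n
  rcases le_or_gt n 15 with h3 | h3
  · interval_cases n <;> exact ⟨by decide, by decide⟩
  · rw [SJ2_right (by omega)]; split_ifs <;> omega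

lemma parf_ok (t : ℤ) : Ok (fun n:ℕ => if ((n:ℤ)+t) % 2 = 0 then 1 else 2) := by
  intro i; dsimp only; split_ifs <;> omega

lemma parb_ok (t : ℤ) : Ok (fun n:ℕ => if (-(n:ℤ)-1+t) % 2 = 0 then 1 else 2) := by
  intro i; dsimp only; split_ifs <;> omega

set_option maxRecDepth 100000
set_option maxHeartbeats 4000000

lemma sj2_mid : ∀ k ∈ Finset.Icc (-37:ℤ) 7, k = 0 ∨
    fracLE (upF 20 (fun n:ℕ => Sj2 ((n:ℤ)+k)) (fun n:ℕ => Sj2 (-(n:ℤ)-1+k)))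
      (loF 20 (fun n:ℕ => Sj2 ((n:ℤ)+0)) (fun n:ℕ => Sj2 (-(n:ℤ)-1+0))) := by decide

lemma sj2_p2tail : ∀ r ∈ Finset.Icc (0:ℤ) 8,
    fracLE (upF 20 (fun n:ℕ => P2 ((n:ℤ)+r)) (fun n:ℕ => P2 (-(n:ℤ)-1+r)))
      (loF 20 (fun n:ℕ => Sj2 ((n:ℤ)+0)) (fun n:ℕ => Sj2 (-(n:ℤ)-1+0))) := by decide

lemma sj2_par : ∀ t ∈ Finset.Icc (0:ℤ) 1,
    fracLE (upF 20 (fun n:ℕ => if ((n:ℤ)+t) % 2 = 0 then 1 else 2)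
        (fun n:ℕ => if (-(n:ℤ)-1+t) % 2 = 0 then 1 else 2))
      (loF 20 (fun n:ℕ => Sj2 ((n:ℤ)+0)) (fun n:ℕ => Sj2 (-(n:ℤ)-1+0))) := by decide

lemma sj2_key (k : ℤ) : lambdaK k Sj2 ≤ lambdaK 0 Sj2 := by
  by_cases hk0 : k = 0
  · subst hk0; exact le_refl _
  rw [lambdaK_eq k, lambdaK_eq 0]
  refine lam_le_lam (fun i => Sj2_ok _) (fun i => Sj2_ok _) (fun i => Sj2_ok _)
    (fun i => Sj2_ok _) (d := 20) (e := 20) ?_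
  rcases le_or_gt k (-38) with hL | hL
  · have e : upF 20 (fun n:ℕ => Sj2 ((n:ℤ)+k)) (fun n:ℕ => Sj2 (-(n:ℤ)-1+k)) =
        upF 20 (fun n:ℕ => if ((n:ℤ)+(k % 2)) % 2 = 0 then 1 else 2)
          (fun n:ℕ => if (-(n:ℤ)-1+(k % 2)) % 2 = 0 then 1 else 2) := by
      refine upF_congr 20 _ _ _ _ (fun i hi => ?_) (fun i hi => ?_)
      · rw [Sj2_left (by omega)]
        have h2 : ((i:ℤ)+k) % 2 = ((i:ℤ)+(k % 2)) % 2 := by omega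
        rw [h2]
      · rw [Sj2_left (by omega)]
        have h2 : (-(i:ℤ)-1+k) % 2 = (-(i:ℤ)-1+(k % 2)) % 2 := by omega
        rw [h2]
    rw [e]
    exact sj2_par (k % 2) (Finset.mem_Icc.2 ⟨by omega, by omega⟩)
  rcases le_or_gt 8 k with hR | hR
  · have e : upF 20 (fun n:ℕ => Sj2 ((n:ℤ)+k)) (fun n:ℕ => Sj2 (-(n:ℤ)-1+k)) =
        upF 20 (fun n:ℕ => P2 ((n:ℤ)+(k % 9))) (fun n:ℕ => P2 (-(n:ℤ)-1+(k % 9))) := by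
      refine upF_congr 20 _ _ _ _ (fun i hi => ?_) (fun i hi => ?_)
      · rw [Sj2_right (by omega)]; exact P2_mod (by omega)
      · rw [Sj2_right (by omega)]; exact P2_mod (by omega)
    rw [e]
    exact sj2_p2tail (k % 9) (Finset.mem_Icc.2 ⟨by omega, by omega⟩)
  · have := sj2_mid k (Finset.mem_Icc.2 ⟨by omega, by omega⟩)
    tauto

lemma sjp_mid : ∀ k ∈ Finset.Icc (-49:ℤ) 7, k = 0 ∨
    fracLE (upF 20 (fun n:ℕ => Sjp ((n:ℤ)+k)) (fun n:ℕ => Sjp (-(n:ℤ)-1+k)))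
      (loF 20 (fun n:ℕ => Sjp ((n:ℤ)+0)) (fun n:ℕ => Sjp (-(n:ℤ)-1+0))) := by decide

lemma sjp_p2tail : ∀ r ∈ Finset.Icc (0:ℤ) 8,
    fracLE (upF 20 (fun n:ℕ => P2 ((n:ℤ)+r)) (fun n:ℕ => P2 (-(n:ℤ)-1+r)))
      (loF 20 (fun n:ℕ => Sjp ((n:ℤ)+0)) (fun n:ℕ => Sjp (-(n:ℤ)-1+0))) := by decide

lemma sjp_par : ∀ t ∈ Finset.Icc (0:ℤ) 1,
    fracLE (upF 20 (fun n:ℕ => if ((n:ℤ)+t) % 2 = 0 then 1 else 2)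
        (fun n:ℕ => if (-(n:ℤ)-1+t) % 2 = 0 then 1 else 2))
      (loF 20 (fun n:ℕ => Sjp ((n:ℤ)+0)) (fun n:ℕ => Sjp (-(n:ℤ)-1+0))) := by decide

lemma sjp_key (k : ℤ) : lambdaK k Sjp ≤ lambdaK 0 Sjp := by
  by_cases hk0 : k = 0
  · subst hk0; exact le_refl _
  rw [lambdaK_eq k, lambdaK_eq 0]
  refine lam_le_lam (fun i => Sjp_ok _) (fun i => Sjp_ok _) (fun i => Sjp_ok _)
    (fun i => Sjp_ok _) (d := 20) (e := 20) ?_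
  rcases le_or_gt k (-50) with hL | hL
  · have e : upF 20 (fun n:ℕ => Sjp ((n:ℤ)+k)) (fun n:ℕ => Sjp (-(n:ℤ)-1+k)) =
        upF 20 (fun n:ℕ => if ((n:ℤ)+(k % 2)) % 2 = 0 then 1 else 2)
          (fun n:ℕ => if (-(n:ℤ)-1+(k % 2)) % 2 = 0 then 1 else 2) := by
      refine upF_congr 20 _ _ _ _ (fun i hi => ?_) (fun i hi => ?_)
      · rw [Sjp_left (by omega)]
        have h2 : ((i:ℤ)+k) % 2 = ((i:ℤ)+(k % 2)) % 2 := by omega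
        rw [h2]
      · rw [Sjp_left (by omega)]
        have h2 : (-(i:ℤ)-1+k) % 2 = (-(i:ℤ)-1+(k % 2)) % 2 := by omega
        rw [h2]
    rw [e]
    exact sjp_par (k % 2) (Finset.mem_Icc.2 ⟨by omega, by omega⟩)
  rcases le_or_gt 8 k with hR | hR
  · have e : upF 20 (fun n:ℕ => Sjp ((n:ℤ)+k)) (fun n:ℕ => Sjp (-(n:ℤ)-1+k)) =
        upF 20 (fun n:ℕ => P2 ((n:ℤ)+(k % 9))) (fun n:ℕ => P2 (-(n:ℤ)-1+(k % 9))) := by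
      refine upF_congr 20 _ _ _ _ (fun i hi => ?_) (fun i hi => ?_)
      · rw [Sjp_right (by omega)]; exact P2_mod (by omega)
      · rw [Sjp_right (by omega)]; exact P2_mod (by omega)
    rw [e]
    exact sjp_p2tail (k % 9) (Finset.mem_Icc.2 ⟨by omega, by omega⟩)
  · have := sjp_mid k (Finset.mem_Icc.2 ⟨by omega, by omega⟩)
    tauto

lemma sJ2_mid : ∀ k ∈ Finset.Icc (-42:ℤ) 36, k = 0 ∨
    fracLE (upF 20 (fun n:ℕ => SJ2 ((n:ℤ)+k)) (fun n:ℕ => SJ2 (-(n:ℤ)-1+k)))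
      (loF 20 (fun n:ℕ => SJ2 ((n:ℤ)+0)) (fun n:ℕ => SJ2 (-(n:ℤ)-1+0))) := by decide

lemma sJ2_par : ∀ t ∈ Finset.Icc (0:ℤ) 1,
    fracLE (upF 20 (fun n:ℕ => if ((n:ℤ)+t) % 2 = 0 then 1 else 2)
        (fun n:ℕ => if (-(n:ℤ)-1+t) % 2 = 0 then 1 else 2))
      (loF 20 (fun n:ℕ => SJ2 ((n:ℤ)+0)) (fun n:ℕ => SJ2 (-(n:ℤ)-1+0))) := by decide

lemma sJ2_key (k : ℤ) : lambdaK k SJ2 ≤ lambdaK 0 SJ2 := by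
  by_cases hk0 : k = 0
  · subst hk0; exact le_refl _
  rw [lambdaK_eq k, lambdaK_eq 0]
  refine lam_le_lam (fun i => SJ2_ok _) (fun i => SJ2_ok _) (fun i => SJ2_ok _)
    (fun i => SJ2_ok _) (d := 20) (e := 20) ?_
  rcases le_or_gt k (-43) with hL | hL
  · have e : upF 20 (fun n:ℕ => SJ2 ((n:ℤ)+k)) (fun n:ℕ => SJ2 (-(n:ℤ)-1+k)) =
        upF 20 (fun n:ℕ => if ((n:ℤ)+(k % 2)) % 2 = 0 then 1 else 2)
          (fun n:ℕ => if (-(n:ℤ)-1+(k % 2)) % 2 = 0 then 1 else 2) := by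
      refine upF_congr 20 _ _ _ _ (fun i hi => ?_) (fun i hi => ?_)
      · rw [SJ2_left (by omega)]
        have h2 : ((i:ℤ)+k) % 2 = ((i:ℤ)+(k % 2)) % 2 := by omega
        rw [h2]
      · rw [SJ2_left (by omega)]
        have h2 : (-(i:ℤ)-1+k) % 2 = (-(i:ℤ)-1+(k % 2)) % 2 := by omega
        rw [h2]
    rw [e]
    exact sJ2_par (k % 2) (Finset.mem_Icc.2 ⟨by omega, by omega⟩)
  rcases le_or_gt 37 k with hR | hR
  · have e : upF 20 (fun n:ℕ => SJ2 ((n:ℤ)+k)) (fun n:ℕ => SJ2 (-(n:ℤ)-1+k)) =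
        upF 20 (fun n:ℕ => if ((n:ℤ)+(k % 2)) % 2 = 0 then 1 else 2)
          (fun n:ℕ => if (-(n:ℤ)-1+(k % 2)) % 2 = 0 then 1 else 2) := by
      refine upF_congr 20 _ _ _ _ (fun i hi => ?_) (fun i hi => ?_)
      · rw [SJ2_right (by omega)]
        have h2 : ((i:ℤ)+k) % 2 = ((i:ℤ)+(k % 2)) % 2 := by omega
        rw [h2]
      · rw [SJ2_right (by omega)]
        have h2 : (-(i:ℤ)-1+k) % 2 = (-(i:ℤ)-1+(k % 2)) % 2 := by omega
        rw [h2]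
    rw [e]
    exact sJ2_par (k % 2) (Finset.mem_Icc.2 ⟨by omega, by omega⟩)
  · have := sJ2_mid k (Finset.mem_Icc.2 ⟨by omega, by omega⟩)
    tauto

lemma chain1 : fracLT (upF 20 (fun n:ℕ => P2 ((n:ℤ))) (fun n:ℕ => P2 (-(n:ℤ)-1)))
    (loF 20 (fun n:ℕ => Sj2 ((n:ℤ))) (fun n:ℕ => Sj2 (-(n:ℤ)-1))) := by decide

lemma chain2 : fracLT (upF 20 (fun n:ℕ => Sj2 ((n:ℤ))) (fun n:ℕ => Sj2 (-(n:ℤ)-1)))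
    (loF 20 (fun n:ℕ => Sjp ((n:ℤ))) (fun n:ℕ => Sjp (-(n:ℤ)-1))) := by decide

lemma chain3 : fracLT (upF 20 (fun n:ℕ => Sjp ((n:ℤ))) (fun n:ℕ => Sjp (-(n:ℤ)-1)))
    (loF 20 (fun n:ℕ => SJ2 ((n:ℤ))) (fun n:ℕ => SJ2 (-(n:ℤ)-1))) := by decide

lemma chain4 : fracLT6 (upF 20 (fun n:ℕ => SJ2 ((n:ℤ))) (fun n:ℕ => SJ2 (-(n:ℤ)-1)))
    (loF 20 (fun n:ℕ => P2 ((n:ℤ))) (fun n:ℕ => P2 (-(n:ℤ)-1))) := by decide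

end MCF

/-- `m(S_j) = λ₀(S_j) = j`, `m(S_{j'}) = λ₀(S_{j'}) = j'`, `m(S_J) = λ₀(S_J) = J`,
all belong to the Markov spectrum, and `j₀ < j < j' < J < j₀ + 6·10⁻¹¹`. -/
theorem j_jp_J_in_M_region_two :
    markovValue Sj2 = lambda0 Sj2 ∧ markovValue Sjp = lambda0 Sjp ∧
    markovValue SJ2 = lambda0 SJ2 ∧
    lambda0 Sj2 ∈ MarkovSpectrum ∧ lambda0 Sjp ∈ MarkovSpectrum ∧
    lambda0 SJ2 ∈ MarkovSpectrum ∧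
    lambda0 P2 < lambda0 Sj2 ∧ lambda0 Sj2 < lambda0 Sjp ∧
    lambda0 Sjp < lambda0 SJ2 ∧ lambda0 SJ2 < lambda0 P2 + 6 / 10 ^ 11 := by
  obtain ⟨hm1, hs1⟩ := MCF.markov_pack Sj2 MCF.Sj2_ok MCF.sj2_key
  obtain ⟨hm2, hs2⟩ := MCF.markov_pack Sjp MCF.Sjp_ok MCF.sjp_key
  obtain ⟨hm3, hs3⟩ := MCF.markov_pack SJ2 MCF.SJ2_ok MCF.sJ2_key
  refine ⟨hm1, hm2, hm3, hs1, hs2, hs3, ?_, ?_, ?_, ?_⟩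
  · rw [MCF.lambda0_eq, MCF.lambda0_eq]
    exact MCF.lam_lt_lam (fun i => MCF.P2_ok _) (fun i => MCF.P2_ok _) (fun i => MCF.Sj2_ok _)
      (fun i => MCF.Sj2_ok _) MCF.chain1
  · rw [MCF.lambda0_eq, MCF.lambda0_eq]
    exact MCF.lam_lt_lam (fun i => MCF.Sj2_ok _) (fun i => MCF.Sj2_ok _) (fun i => MCF.Sjp_ok _)
      (fun i => MCF.Sjp_ok _) MCF.chain2
  · rw [MCF.lambda0_eq, MCF.lambda0_eq]
    exact MCF.lam_lt_lam (fun i => MCF.Sjp_ok _) (fun i => MCF.Sjp_ok _) (fun i => MCF.SJ2_ok _)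
      (fun i => MCF.SJ2_ok _) MCF.chain3
  · rw [MCF.lambda0_eq, MCF.lambda0_eq]
    exact MCF.lam_lt_add (fun i => MCF.SJ2_ok _) (fun i => MCF.SJ2_ok _) (fun i => MCF.P2_ok _)
      (fun i => MCF.P2_ok _) MCF.chain4
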